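/- arXiv:1102.3483 — 3 statements merged into one kernel-verified Lean document; each statement's English description precedes it below -/
import Mathlib

section
/- Let X1, X2, X3 be pairwise disjoint nonempty vertex subsets of CQ_3 whose union is the whole vertex set, with |X1| >= |X2| >= |X3| > 0. Then the sum over all pairs 1 <= i < j <= 3 of e(X_i, X_j) is at least 5; moreover, if this sum equals 5, then (|X1|, |X2|, |X3|) = (6, 1, 1) and e(X_i, X_j) > 0 for every pair 1 <= i < j <= 3. -/
/-- Vertices of the 3-dimensional cubes: binary strings `x1x2x3` of length 3. -/
abbrev Vtx3 := Bool × Bool × Bool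

/-- The 12 edges of the 3-dimensional crossed cube `CQ_3`. -/
def cq3EdgeList : List (Vtx3 × Vtx3) :=
  [ ((false,false,false),(false,false,true)),
    ((false,true,false),(false,true,true)),
    ((true,false,false),(true,false,true)),
    ((true,true,false),(true,true,true)),
    ((false,false,false),(false,true,false)),
    ((false,false,true),(false,true,true)),
    ((true,false,false),(true,true,false)),
    ((true,false,true),(true,true,true)),
    ((false,false,false),(true,false,false)),
    ((false,true,false),(true,true,false)),
    ((false,false,true),(true,true,true)),
    ((false,true,true),(true,false,true)) ]

/-- The 3-dimensional crossed cube `CQ_3`. -/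
def CQ3 : SimpleGraph Vtx3 where
  Adj u v := (u, v) ∈ cq3EdgeList ∨ (v, u) ∈ cq3EdgeList
  symm := ⟨fun _ _ h => Or.symm h⟩
  loopless := by
    refine ⟨?_⟩
    intro x
    revert x
    decide

instance : DecidableRel CQ3.Adj :=
  fun u v => inferInstanceAs (Decidable ((u, v) ∈ cq3EdgeList ∨ (v, u) ∈ cq3EdgeList))

/-- `e(X, Y)`: the number of edges of `CQ_3` with one end in `X` and the
other end in `Y` (for disjoint `X`, `Y`). -/
def eXY (X Y : Finset Vtx3) : ℕ :=
  (Finset.univ.filter fun p : Vtx3 × Vtx3 => p.1 ∈ X ∧ p.2 ∈ Y ∧ CQ3.Adj p.1 p.2).card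

/-!
An edge between two parts lies in the boundary of exactly those two parts, so twice the
number of crossing edges is `|∂X₀| + |∂X₁| + |∂X₂|`. The edge-isoperimetric profile of `CQ_3`
(checked over all 256 vertex sets) bounds `|∂Xᵢ|` from below in terms of `|Xᵢ|`; over the
admissible part sizes these bounds sum to at least 10, with equality only for `(6, 1, 1)`.
There the bounds `4, 3, 3` on the three boundaries force `e(X₁, X₂) = 1` and
`e(X₀, X₁) = e(X₀, X₂) = 2`.
-/

open Finset

lemma eXY_comm (X Y : Finset Vtx3) : eXY X Y = eXY Y X := by
  refine Finset.card_bij (fun p _ => p.swap) ?_ ?_ ?_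
  · simp only [mem_filter, mem_univ, true_and, Prod.fst_swap, Prod.snd_swap]
    exact fun p ⟨hX, hY, hadj⟩ => ⟨hY, hX, hadj.symm⟩
  · simp
  · simp only [mem_filter, mem_univ, true_and]
    exact fun p ⟨hY, hX, hadj⟩ => ⟨p.swap, ⟨hX, hY, hadj.symm⟩, rfl⟩

lemma eXY_union_right (X : Finset Vtx3) {Y Z : Finset Vtx3} (h : Disjoint Y Z) :
    eXY X (Y ∪ Z) = eXY X Y + eXY X Z := by
  unfold eXY
  rw [← card_union_of_disjoint]
  · congr 1
    ext p
    simp only [mem_filter, mem_univ, true_and, mem_union]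
    tauto
  · exact disjoint_filter.2 fun p _ hY hZ => disjoint_left.1 h hY.2.1 hZ.2.1

/-- The edge-isoperimetric profile of `CQ_3`: the least size of `∂S` over `|S| = k`. -/
def cq3MinBoundary : ℕ → ℕ
  | 1 => 3 | 2 => 4 | 3 => 5 | 4 => 4 | 5 => 5 | 6 => 4 | 7 => 3 | _ => 0

theorem cq3MinBoundary_le_eXY_compl (S : Finset Vtx3) : cq3MinBoundary #S ≤ eXY S Sᶜ := by
  revert S
  decide +kernel

lemma cq3MinBoundary_sum {a b c : ℕ} (hsum : a + b + c = 8) (hcb : c ≤ b) (hba : b ≤ a)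
    (hc : 0 < c) :
    10 ≤ cq3MinBoundary a + cq3MinBoundary b + cq3MinBoundary c ∧
      (cq3MinBoundary a + cq3MinBoundary b + cq3MinBoundary c = 10 →
        a = 6 ∧ b = 1 ∧ c = 1) := by
  have ha : a ≤ 6 := by omega
  interval_cases a <;> interval_cases b <;> interval_cases c <;> first | omega | decide

lemma eXY_compl_of_partition {A B C : Finset Vtx3} (hAB : Disjoint A B) (hAC : Disjoint A C)
    (hBC : Disjoint B C) (hU : A ∪ B ∪ C = univ) :
    eXY A Aᶜ = eXY A B + eXY A C ∧ eXY B Bᶜ = eXY A B + eXY B C ∧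
      eXY C Cᶜ = eXY A C + eXY B C := by
  have compl_eq {P Q R : Finset Vtx3} (hPQ : Disjoint P Q) (hPR : Disjoint P R)
      (hU : P ∪ (Q ∪ R) = univ) : Pᶜ = Q ∪ R :=
    IsCompl.compl_eq ⟨disjoint_union_right.2 ⟨hPQ, hPR⟩, codisjoint_iff.2 hU⟩
  rw [compl_eq hAB hAC (by rw [← union_assoc, hU]),
    compl_eq hAB.symm hBC (by rw [← union_assoc, union_comm B, hU]),
    compl_eq hAC.symm hBC.symm (by rw [union_comm, hU]),
    eXY_union_right _ hBC, eXY_union_right _ hAC, eXY_union_right _ hAB,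
    eXY_comm B A, eXY_comm C A, eXY_comm C B]
  exact ⟨rfl, rfl, rfl⟩

/-- For a partition of `V(CQ_3)` into three nonempty parts `X 0, X 1, X 2` with
`|X 0| ≥ |X 1| ≥ |X 2| > 0`, the number of crossing edges is at least 5, with
equality forcing part sizes `(6, 1, 1)` and all pairwise counts positive. -/
theorem cq3_three_parts_ge_five (X : Fin 3 → Finset Vtx3)
    (hdisj : ∀ i j, i ≠ j → Disjoint (X i) (X j))
    (hunion : X 0 ∪ X 1 ∪ X 2 = Finset.univ)
    (hord : (X 2).card ≤ (X 1).card ∧ (X 1).card ≤ (X 0).card)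
    (hpos : 0 < (X 2).card) :
    5 ≤ eXY (X 0) (X 1) + eXY (X 0) (X 2) + eXY (X 1) (X 2) ∧
    (eXY (X 0) (X 1) + eXY (X 0) (X 2) + eXY (X 1) (X 2) = 5 →
      ((X 0).card = 6 ∧ (X 1).card = 1 ∧ (X 2).card = 1) ∧
      (∀ i j : Fin 3, i < j → 0 < eXY (X i) (X j))) := by
  have h01 := hdisj 0 1 (by decide)
  have h02 := hdisj 0 2 (by decide)
  have h12 := hdisj 1 2 (by decide)
  have hcard : #(X 0) + #(X 1) + #(X 2) = 8 := by
    rw [← card_union_of_disjoint h01, ← card_union_of_disjoint (disjoint_union_left.2 ⟨h02, h12⟩),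
      hunion, card_univ]
    rfl
  obtain ⟨hX0, hX1, hX2⟩ := eXY_compl_of_partition h01 h02 h12 hunion
  have hmin0 := hX0 ▸ cq3MinBoundary_le_eXY_compl (X 0)
  have hmin1 := hX1 ▸ cq3MinBoundary_le_eXY_compl (X 1)
  have hmin2 := hX2 ▸ cq3MinBoundary_le_eXY_compl (X 2)
  obtain ⟨hprofile, hsizes⟩ := cq3MinBoundary_sum hcard hord.1 hord.2 hpos
  refine ⟨by omega, fun hfive => ?_⟩
  obtain ⟨hs0, hs1, hs2⟩ := hsizes (by omega)
  refine ⟨⟨hs0, hs1, hs2⟩, ?_⟩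
  simp only [hs0, hs1, hs2, cq3MinBoundary] at hmin0 hmin1 hmin2
  have hpos01 : 0 < eXY (X 0) (X 1) := by omega
  have hpos02 : 0 < eXY (X 0) (X 2) := by omega
  have hpos12 : 0 < eXY (X 1) (X 2) := by omega
  intro i j hij
  fin_cases i <;> fin_cases j <;> first | exact absurd hij (by decide) | assumption
end

section
/- If u and v are adjacent vertices of LTQ_3, then there exists a set Y of vertices of LTQ_3 disjoint from {u, v} such that ⟨{u, v} ∪ Y⟩ is isomorphic to C_4 (i.e., every edge of LTQ_3 lies in an induced 4-cycle). -/
/-- The 12 edges of the 3-dimensional locally twisted cube `LTQ_3`. -/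
def ltq3EdgeList : List (Vtx3 × Vtx3) :=
  [ ((false,false,false),(false,false,true)),
    ((false,false,true),(false,true,true)),
    ((false,true,true),(false,true,false)),
    ((false,true,false),(false,false,false)),
    ((true,false,false),(true,false,true)),
    ((true,false,true),(true,true,true)),
    ((true,true,true),(true,true,false)),
    ((true,true,false),(true,false,false)),
    ((false,false,false),(true,false,false)),
    ((false,false,true),(true,true,true)),
    ((false,true,false),(true,true,false)),
    ((false,true,true),(true,false,true)) ]

/-- The 3-dimensional locally twisted cube `LTQ_3`. -/
def LTQ3 : SimpleGraph Vtx3 where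
  Adj u v := (u, v) ∈ ltq3EdgeList ∨ (v, u) ∈ ltq3EdgeList
  symm := ⟨fun _ _ h => Or.symm h⟩
  loopless := ⟨by
    intro x
    revert x
    decide⟩

instance : DecidableRel LTQ3.Adj :=
  fun u v => inferInstanceAs (Decidable ((u, v) ∈ ltq3EdgeList ∨ (v, u) ∈ ltq3EdgeList))

/-! Within each half `x1 = b` the four vertices form a chordless square, which covers all edges
not changing `x1`; the four edges changing `x1` lie on the chordless squares
`000-100-110-010` and `001-111-101-011`. A chordless square spans an induced `C_4`. -/

namespace SimpleGraph

variable {V : Type*} (G : SimpleGraph V)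

structure IsInducedSquare (u v w x : V) : Prop where
  adj₁₂ : G.Adj u v
  adj₂₃ : G.Adj v w
  adj₃₄ : G.Adj w x
  adj₄₁ : G.Adj x u
  not_adj₁₃ : ¬G.Adj u w
  not_adj₂₄ : ¬G.Adj v x
  ne₁₃ : u ≠ w
  ne₂₄ : v ≠ x

instance [DecidableEq V] [DecidableRel G.Adj] {u v w x : V} :
    Decidable (G.IsInducedSquare u v w x) :=
  decidable_of_iff
    (G.Adj u v ∧ G.Adj v w ∧ G.Adj w x ∧ G.Adj x u ∧ ¬G.Adj u w ∧ ¬G.Adj v x ∧ u ≠ w ∧ v ≠ x)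
    ⟨fun ⟨h₁, h₂, h₃, h₄, h₅, h₆, h₇, h₈⟩ ↦ ⟨h₁, h₂, h₃, h₄, h₅, h₆, h₇, h₈⟩,
      fun ⟨h₁, h₂, h₃, h₄, h₅, h₆, h₇, h₈⟩ ↦ ⟨h₁, h₂, h₃, h₄, h₅, h₆, h₇, h₈⟩⟩

variable {G} {u v w x : V}

def IsInducedSquare.embedding (h : G.IsInducedSquare u v w x) : cycleGraph 4 ↪g G where
  toFun := ![u, v, w, x]
  inj' := by
    obtain ⟨a₁₂, a₂₃, a₃₄, a₄₁, -, -, ne₁₃, ne₂₄⟩ := h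
    have := a₁₂.ne; have := a₂₃.ne; have := a₃₄.ne; have := a₄₁.ne
    intro i j hij
    fin_cases i <;> fin_cases j <;> simp_all [eq_comm]
  map_rel_iff' := by
    intro i j
    change G.Adj (![u, v, w, x] i) (![u, v, w, x] j) ↔ _
    obtain ⟨a₁₂, a₂₃, a₃₄, a₄₁, n₁₃, n₂₄, -, -⟩ := h
    rw [cycleGraph_adj]
    fin_cases i <;> fin_cases j <;> simp_all [G.adj_comm] <;> decide

theorem IsInducedSquare.nonempty_induce_iso_cycleGraph (h : G.IsInducedSquare u v w x) :
    Nonempty (G.induce {u, v, w, x} ≃g cycleGraph 4) := by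
  have hrange : Set.range ![u, v, w, x] = {u, v, w, x} := by
    simp only [Matrix.range_cons, Matrix.range_empty, Set.union_empty, Set.singleton_union]
  exact ⟨hrange ▸ h.embedding.isoInduceRange.symm⟩

theorem IsInducedSquare.disjoint (h : G.IsInducedSquare u v w x) :
    Disjoint ({w, x} : Set V) {u, v} := by
  simp only [Set.disjoint_insert_left, Set.disjoint_singleton_left, Set.mem_insert_iff,
    Set.mem_singleton_iff, not_or]
  exact ⟨⟨h.ne₁₃.symm, h.adj₂₃.ne'⟩, h.adj₄₁.ne, h.ne₂₄.symm⟩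

end SimpleGraph

theorem ltq3_exists_isInducedSquare (u v : Vtx3) (h : LTQ3.Adj u v) :
    ∃ w x : Vtx3, LTQ3.IsInducedSquare u v w x := by
  revert u v
  decide

/-- Every edge of `LTQ_3` lies in an induced 4-cycle: for adjacent `u, v` there
is a vertex set `Y` disjoint from `{u, v}` with `⟨{u, v} ∪ Y⟩ ≅ C_4`. -/
theorem ltq3_edge_in_c4 (u v : Vtx3) (h : LTQ3.Adj u v) :
    ∃ Y : Set Vtx3, Disjoint Y ({u, v} : Set Vtx3) ∧
      Nonempty (LTQ3.induce (({u, v} : Set Vtx3) ∪ Y) ≃g SimpleGraph.cycleGraph 4) := by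
  obtain ⟨w, x, hsquare⟩ := ltq3_exists_isInducedSquare u v h
  refine ⟨{w, x}, hsquare.disjoint, ?_⟩
  rw [Set.insert_union, Set.singleton_union]
  exact hsquare.nonempty_induce_iso_cycleGraph
end

section
/- Let u1, u2, u3, u4, u5 be distinct vertices in L (the set of vertices of LTQ_4 whose first bit is 0) such that ⟨{u1, u2, u3, u4}⟩ is isomorphic to C_4. Then for every i in {1, 2, 3, 4}, the set {π(u1), π(u2), π(u3), π(u4), π(u5)} \ {π(u_i)} does not induce a subgraph of LTQ_4 isomorphic to C_4. -/
/-- Vertices of the 4-dimensional cubes: binary strings `x1x2x3x4` of length 4. -/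
abbrev Vtx4 := Bool × Vtx3

/-- The twist map of the locally twisted cube:
`x2x3x4 ↦ (x2+x4)x3x4`, where `+` is addition mod 2. -/
def ltqTwist : Vtx3 → Vtx3
  | (x2, x3, x4) => (xor x2 x4, x3, x4)

/-- The 4-dimensional locally twisted cube `LTQ_4`: two copies of `LTQ_3`
(prefixed with 0 resp. 1), and each `0x2x3x4` joined to `1(x2+x4)x3x4`. -/
def LTQ4 : SimpleGraph Vtx4 where
  Adj u v := (u.1 = v.1 ∧ LTQ3.Adj u.2 v.2)
    ∨ (u.1 = false ∧ v.1 = true ∧ v.2 = ltqTwist u.2)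
    ∨ (u.1 = true ∧ v.1 = false ∧ u.2 = ltqTwist v.2)
  symm := ⟨by
    rintro ⟨b1, x⟩ ⟨b2, y⟩ (⟨h1, h2⟩ | ⟨h1, h2, h3⟩ | ⟨h1, h2, h3⟩)
    · exact Or.inl ⟨h1.symm, h2.symm⟩
    · exact Or.inr (Or.inr ⟨h2, h1, h3⟩)
    · exact Or.inr (Or.inl ⟨h2, h1, h3⟩)⟩
  loopless := ⟨by
    rintro ⟨b, x⟩ (⟨-, h⟩ | ⟨h1, h2, -⟩ | ⟨h1, h2, -⟩)
    · exact LTQ3.loopless.irrefl x h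
    · subst h1; exact Bool.false_ne_true h2
    · subst h2; exact Bool.false_ne_true h1⟩

/-- The map `π` sending a vertex `0x2x3x4` of the left copy `L` of `LTQ_3`
inside `LTQ_4` to its unique neighbour `1(x2+x4)x3x4` in the right copy. -/
def pi4 : Vtx4 → Vtx4 := fun u => (true, ltqTwist u.2)

/-!
Every 4-cycle of `LTQ_3` lies on one of the planes `x1 = b`, `x3 = b` of `𝔽₂³`. The twist is
linear and involutive, so a set whose image under it spans a 4-cycle is one of the planes
`x1 + x3 = b`, `x3 = b`. Dropping `u_i` keeps three points of the plane carrying `u1, …, u4`,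
and two distinct planes share at most two points; so the image can only be a 4-cycle if the two
planes coincide, which would put `u5` on the original cycle.
-/

open SimpleGraph Set

namespace SimpleGraph

variable {V W : Type*} {G : SimpleGraph V} {H : SimpleGraph W}

theorem exists_eq_of_induce_iso_cycleGraph_four {S : Set V}
    (e : G.induce S ≃g cycleGraph 4) :
    ∃ a b c d, S = {a, b, c, d} ∧ G.Adj a b ∧ G.Adj b c ∧ G.Adj c d ∧ G.Adj d a ∧
      a ≠ c ∧ b ≠ d := by
  set f : Fin 4 → V := fun k => e.symm k
  have hf : ∀ k l, (cycleGraph 4).Adj k l → G.Adj (f k) (f l) := fun k l h =>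
    e.symm.map_adj_iff.mpr h
  have hne : ∀ k l, k ≠ l → f k ≠ f l := fun k l h hkl =>
    h (e.symm.injective (Subtype.ext hkl))
  refine ⟨f 0, f 1, f 2, f 3, ?_, hf 0 1 (by decide), hf 1 2 (by decide), hf 2 3 (by decide),
    hf 3 0 (by decide), hne 0 2 (by decide), hne 1 3 (by decide)⟩
  calc S = range f := by
        rw [range_comp', e.symm.surjective.range_eq, image_univ, Subtype.range_coe]
    _ = {f 0, f 1, f 2, f 3} := by
        ext x
        simp [Fin.exists_fin_succ, eq_comm]

noncomputable def Embedding.induceImage (f : G ↪g H) (s : Set V) :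
    G.induce s ≃g H.induce (f '' s) where
  toEquiv := Equiv.Set.image f s f.injective
  map_rel_iff' := by simp

end SimpleGraph

def IsLTQ3Square (S : Set Vtx3) : Prop :=
  ∃ b : Bool, S = {x | x.1 = b} ∨ S = {x | x.2.2 = b}

set_option synthInstance.maxSize 1024 in
theorem isLTQ3Square_of_cycle (a b c d : Vtx3) (hab : LTQ3.Adj a b) (hbc : LTQ3.Adj b c)
    (hcd : LTQ3.Adj c d) (hda : LTQ3.Adj d a) (hac : a ≠ c) (hbd : b ≠ d) :
    IsLTQ3Square {a, b, c, d} := by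
  simp only [IsLTQ3Square, Set.ext_iff, mem_insert_iff, mem_singleton_iff, mem_ofPred_eq]
  revert a b c d
  decide

theorem isLTQ3Square_of_iso_cycleGraph_four {S : Set Vtx3}
    (e : LTQ3.induce S ≃g cycleGraph 4) : IsLTQ3Square S := by
  obtain ⟨a, b, c, d, rfl, hab, hbc, hcd, hda, hac, hbd⟩ :=
    exists_eq_of_induce_iso_cycleGraph_four e
  exact isLTQ3Square_of_cycle a b c d hab hbc hcd hda hac hbd

theorem ltqTwist_involutive : Function.Involutive ltqTwist := by
  unfold Function.Involutive
  decide

theorem IsLTQ3Square.subset_of_diff_subset {S T : Set Vtx3} (hS : IsLTQ3Square S)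
    (hT : IsLTQ3Square (ltqTwist '' T)) {x : Vtx3} (h : S \ {x} ⊆ T) : T ⊆ S := by
  have hT' : T = ltqTwist ⁻¹' (ltqTwist '' T) :=
    (preimage_image_eq T ltqTwist_involutive.injective).symm
  generalize ltqTwist '' T = U at hT hT'
  subst hT'
  obtain ⟨b, rfl | rfl⟩ := hS <;> obtain ⟨b', rfl | rfl⟩ := hT <;>
  · simp only [subset_def, mem_sdiff, mem_preimage, mem_ofPred_eq, mem_singleton_iff] at h ⊢
    revert b b' x
    decide

def ltq4Copy (b : Bool) : LTQ3 ↪g LTQ4 where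
  toFun x := (b, x)
  inj' _ _ h := congrArg Prod.snd h
  map_rel_iff' {x y} := by
    change (b = b ∧ LTQ3.Adj x y) ∨ (b = false ∧ b = true ∧ y = ltqTwist x) ∨
      (b = true ∧ b = false ∧ x = ltqTwist y) ↔ LTQ3.Adj x y
    cases b <;> simp

theorem isLTQ3Square_of_ltq4Copy_image {b : Bool} {S : Set Vtx3}
    (h : Nonempty (LTQ4.induce (ltq4Copy b '' S) ≃g cycleGraph 4)) : IsLTQ3Square S :=
  let ⟨e⟩ := h
  isLTQ3Square_of_iso_cycleGraph_four ((ltq4Copy b).induceImage S |>.trans e)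

/-- If `u 0, …, u 4` are distinct vertices of the left copy `L` of `LTQ_3` in
`LTQ_4` such that `{u 0, u 1, u 2, u 3}` induces a `C_4`, then for every
`i ∈ {0, 1, 2, 3}` the set `{π(u 0), …, π(u 4)} \ {π(u i)}` does not induce a
`C_4` in `LTQ_4`. -/
theorem ltq4_c4_image (u : Fin 5 → Vtx4) (hinj : Function.Injective u)
    (hL : ∀ i, (u i).1 = false)
    (hC4 : Nonempty (LTQ4.induce ({u 0, u 1, u 2, u 3} : Set Vtx4) ≃g
      SimpleGraph.cycleGraph 4)) :
    ∀ i : Fin 5, i.val < 4 →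
      ¬Nonempty (LTQ4.induce ((Set.range fun j => pi4 (u j)) \ {pi4 (u i)}) ≃g
        SimpleGraph.cycleGraph 4) := by
  intro i hi hC4'
  obtain ⟨v, hu⟩ : ∃ v : Fin 5 → Vtx3, ∀ j, u j = ltq4Copy false (v j) :=
    ⟨fun j => (u j).2, fun j => Prod.ext (hL j) rfl⟩
  have hv : Function.Injective v := fun j k h => hinj (by rw [hu, hu, h])
  have hS : IsLTQ3Square {v 0, v 1, v 2, v 3} := by
    refine isLTQ3Square_of_ltq4Copy_image (b := false) ?_
    rwa [image_insert_eq, image_insert_eq, image_insert_eq, image_singleton,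
      ← hu, ← hu, ← hu, ← hu]
  have hT : IsLTQ3Square (ltqTwist '' (range v \ {v i})) := by
    refine isLTQ3Square_of_ltq4Copy_image (b := true) ?_
    have himage : ltq4Copy true '' (ltqTwist '' (range v \ {v i})) =
        (range fun j => pi4 (u j)) \ {pi4 (u i)} := by
      rw [image_sdiff ltqTwist_involutive.injective, image_sdiff (ltq4Copy true).injective,
        image_singleton, image_singleton, ← range_comp, ← range_comp]
      simp only [hu]
      rfl
    rwa [himage]
  have hTS := hS.subset_of_diff_subset hT (x := v i)
    (by rintro y ⟨(rfl | rfl | rfl | rfl), hy⟩ <;> exact ⟨mem_range_self _, hy⟩)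
  have h4 : v 4 ∈ range v \ {v i} := ⟨mem_range_self 4, hv.ne (by omega)⟩
  rcases hTS h4 with h | h | h | h <;> exact absurd (hv h) (by decide)
end
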